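/- Let p be a polynomial with real coefficients of degree 8, with coefficients c_i, such that c_0 > 0, p is palindromic (c_i = c_{8-i} for all 0 ≤ i ≤ 8), and the coefficients of p alternate in sign ((-1)^i · c_i ≥ 0 for every i ≥ 0). If at least four of the complex roots of p, counted with multiplicity, lie on the unit circle, and p has a complex root z with Re z ≤ -1, then -c_7/c_8 < 2. -/

import Mathlib

/-!
Since the coefficients are real and palindromic, the roots of `p` are stable under complex
conjugation and under `w ↦ w⁻¹`. Alternating signs and `c₀ > 0` rule out real roots in `(-∞, 0]`,
so `z` is not real and `|z| > 1`; hence `z, z̄, z⁻¹, z̄⁻¹` are four distinct roots off the unit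
circle, and together with the roots on the circle they are all eight roots. Their sum `-c₇/c₈`
has real part at most `4 + 2 Re z + 2 Re z⁻¹`, which is `< 2` because `Re z ≤ -1` and
`Re z⁻¹ = Re z / |z|² < 0`.
-/

open Polynomial ComplexConjugate

namespace Multiset

variable {α : Type*}

theorem filter_not_eq_of_le_of_card_le {q : α → Prop} [DecidablePred q] {s m : Multiset α}
    (hm : m ≤ s.filter fun a => ¬q a) (hcard : card s ≤ card (s.filter q) + card m) :
    (s.filter fun a => ¬q a) = m := by
  refine (eq_of_le_of_card_le hm ?_).symm
  have := congrArg card (filter_add_not q s)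
  rw [card_add] at this
  omega

theorem re_sum_le_card {s : Multiset ℂ} (hs : ∀ w ∈ s, ‖w‖ ≤ 1) : s.sum.re ≤ card s := by
  rw [← Complex.coe_reAddGroupHom, map_multiset_sum, Complex.coe_reAddGroupHom]
  simpa using sum_le_card_nsmul (s.map Complex.re) 1 (by
    simpa using fun w hw => (Complex.re_le_norm w).trans (hs w hw))

end Multiset

namespace Polynomial

theorem reflect_eq_self_of_coeff_eq {R : Type*} [Semiring R] {p : R[X]} {n : ℕ}
    (hpal : ∀ i ≤ n, p.coeff i = p.coeff (n - i)) : p.reflect n = p := by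
  ext i
  rw [coeff_reflect]
  by_cases hi : i ≤ n
  · rw [revAt_le hi]
    exact (hpal i hi).symm
  · rw [revAt_eq_self_of_lt (not_le.mp hi)]

theorem aeval_inv_eq_zero_of_reflect_eq_self {R K : Type*} [CommSemiring R] [Field K]
    [Algebra R K] {p : R[X]} {n : ℕ} (hdeg : p.natDegree ≤ n) (hrefl : p.reflect n = p)
    {z : K} (hz0 : z ≠ 0) (hz : aeval z p = 0) : aeval z⁻¹ p = 0 := by
  let _ := invertibleOfNonzero hz0
  rw [aeval_def, ← invOf_eq_inv, ← hrefl, eval₂_reflect_eq_zero_iff _ _ _ _ hdeg]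
  exact hz

theorem Splits.sum_roots_eq_neg_nextCoeff_div_leadingCoeff {K : Type*} [Field K] {f : K[X]}
    (hf : f.Splits) (h0 : f ≠ 0) : f.roots.sum = -f.nextCoeff / f.leadingCoeff := by
  rw [hf.nextCoeff_eq_neg_sum_roots_mul_leadingCoeff]
  field_simp [leadingCoeff_ne_zero.mpr h0]

theorem eval_pos_of_alternating {p : ℝ[X]} (halt : ∀ i, 0 ≤ (-1 : ℝ) ^ i * p.coeff i)
    (h0 : 0 < p.coeff 0) {t : ℝ} (ht : t ≤ 0) : 0 < p.eval t := by
  rw [eval_eq_sum_range]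
  refine Finset.sum_pos' (fun i _ => ?_) ⟨0, by simp, by simpa using h0⟩
  have hterm : p.coeff i * t ^ i = ((-1) ^ i * p.coeff i) * (-t) ^ i := by
    rw [neg_pow t, mul_mul_mul_comm, ← mul_pow]
    norm_num
  rw [hterm]
  exact mul_nonneg (halt i) (pow_nonneg (by linarith) i)

theorem im_ne_zero_of_aeval_eq_zero {p : ℝ[X]} (halt : ∀ i, 0 ≤ (-1 : ℝ) ^ i * p.coeff i)
    (h0 : 0 < p.coeff 0) {z : ℂ} (hz : aeval z p = 0) (hre : z.re ≤ 0) : z.im ≠ 0 := by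
  intro him
  have hreal : (z.re : ℂ) = z := Complex.ext rfl (by simp [him])
  rw [← hreal, ← Complex.coe_algebraMap, aeval_algebraMap_apply_eq_algebraMap_eval] at hz
  exact (eval_pos_of_alternating halt h0 hre).ne' (by simpa using hz)

end Polynomial

namespace Complex

noncomputable def conjInvOrbit (z : ℂ) : Multiset ℂ := {z, conj z, z⁻¹, conj z⁻¹}

theorem card_conjInvOrbit (z : ℂ) : Multiset.card (conjInvOrbit z) = 4 := rfl

theorem norm_eq_one_iff_of_mem_conjInvOrbit {z w : ℂ} (hw : w ∈ conjInvOrbit z) :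
    ‖w‖ = 1 ↔ ‖z‖ = 1 := by
  simp only [conjInvOrbit, Multiset.insert_eq_cons, Multiset.mem_cons,
    Multiset.mem_singleton] at hw
  rcases hw with rfl | rfl | rfl | rfl <;> simp

theorem nodup_conjInvOrbit {z : ℂ} (him : z.im ≠ 0) (hz : ‖z‖ ≠ 1) :
    (conjInvOrbit z).Nodup := by
  have hz0 : z ≠ 0 := fun h => him (by simp [h])
  have hnorm : ‖z‖⁻¹ ≠ ‖z‖ := fun h => hz (by
    have := norm_pos_iff.mpr hz0
    field_simp at h
    nlinarith)
  have hconj : conj z ≠ z := fun h => him (conj_eq_iff_im.mp h)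
  simp only [conjInvOrbit, Multiset.insert_eq_cons, Multiset.nodup_cons, Multiset.mem_cons,
    Multiset.mem_singleton, Multiset.nodup_singleton, and_true, not_or]
  refine ⟨⟨fun h => hconj h.symm, ?_, ?_⟩, ⟨?_, ?_⟩,
    fun h => hconj (inv_injective (by rwa [map_inv₀] at h)).symm⟩
  all_goals exact fun h => hnorm (by simpa using (congrArg norm h).symm)

theorem one_lt_norm_of_re_le_neg_one {z : ℂ} (him : z.im ≠ 0) (hre : z.re ≤ -1) : 1 < ‖z‖ :=
  calc 1 ≤ |z.re| := by rw [abs_of_neg (by linarith)]; linarith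
    _ < ‖z‖ := abs_re_lt_norm.mpr him

theorem re_sum_conjInvOrbit_lt {z : ℂ} (hre : z.re ≤ -1) : (conjInvOrbit z).sum.re < -2 := by
  have hinv : z⁻¹.re < 0 := by
    rw [inv_re]
    exact div_neg_of_neg_of_pos (by linarith) (normSq_pos.mpr fun h => by simp [h] at hre; linarith)
  simp only [conjInvOrbit, Multiset.insert_eq_cons, Multiset.sum_cons, Multiset.sum_singleton,
    add_re, conj_re]
  linarith

end Complex

open Complex in
theorem Polynomial.conjInvOrbit_le_filter_roots_map {p : ℝ[X]} {n : ℕ} (hp : p ≠ 0)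
    (hdeg : p.natDegree ≤ n) (hrefl : p.reflect n = p) {z : ℂ} (him : z.im ≠ 0)
    (hnorm : ‖z‖ ≠ 1) (hz : aeval z p = 0) :
    conjInvOrbit z ≤ (p.map (algebraMap ℝ ℂ)).roots.filter fun w => ¬‖w‖ = 1 := by
  have hinv : aeval z⁻¹ p = 0 :=
    aeval_inv_eq_zero_of_reflect_eq_self hdeg hrefl (fun h => him (by simp [h])) hz
  refine Multiset.le_filter.mpr ⟨(Multiset.le_iff_subset (nodup_conjInvOrbit him hnorm)).mpr
    fun w hw => ?_, fun w hw => (norm_eq_one_iff_of_mem_conjInvOrbit hw).not.mpr hnorm⟩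
  rw [mem_roots_map_of_injective (algebraMap ℝ ℂ).injective hp, ← aeval_def]
  simp only [conjInvOrbit, Multiset.insert_eq_cons, Multiset.mem_cons,
    Multiset.mem_singleton] at hw
  rcases hw with rfl | rfl | rfl | rfl <;> simp only [aeval_conj, hz, hinv, map_zero]

/-- A real polynomial of degree `8` with positive constant term, palindromic
coefficients (`cᵢ = c_{8-i}`) and coefficients alternating in sign, having at
least four complex roots (counted with multiplicity) on the unit circle and a
complex root `z` with `Re z ≤ -1`, satisfies `-c₇/c₈ < 2`. -/
theorem stmt_5 (p : Polynomial ℝ)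
    (hdeg : p.natDegree = 8)
    (h0 : 0 < p.coeff 0)
    (hpal : ∀ i ≤ 8, p.coeff i = p.coeff (8 - i))
    (halt : ∀ i : ℕ, 0 ≤ (-1 : ℝ) ^ i * p.coeff i)
    (hcirc : 4 ≤
      ((p.map (algebraMap ℝ ℂ)).roots.filter fun z => ‖z‖ = 1).card)
    (z : ℂ) (hz : Polynomial.aeval z p = 0) (hre : z.re ≤ -1) :
    -(p.coeff 7) / p.coeff 8 < 2 := by
  have hp : p ≠ 0 := ne_zero_of_natDegree_gt (n := 0) (by omega)
  have him : z.im ≠ 0 := im_ne_zero_of_aeval_eq_zero halt h0 hz (by linarith)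
  have hnorm : ‖z‖ ≠ 1 := (Complex.one_lt_norm_of_re_le_neg_one him hre).ne'
  set R := (p.map (algebraMap ℝ ℂ)).roots
  have hsplit := Multiset.filter_add_not (fun w => ‖w‖ = 1) R
  have hR : Multiset.card R = 8 := by
    rw [← (IsAlgClosed.splits _).natDegree_eq_card_roots, natDegree_map, hdeg]
  have hoff : (R.filter fun w => ¬‖w‖ = 1) = Complex.conjInvOrbit z :=
    Multiset.filter_not_eq_of_le_of_card_le (conjInvOrbit_le_filter_roots_map hp hdeg.le
      (reflect_eq_self_of_coeff_eq hpal) him hnorm hz) (by rw [hR, Complex.card_conjInvOrbit]; omega)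
  have hon : (R.filter fun w => ‖w‖ = 1).sum.re ≤ 4 := by
    have hcard := congrArg Multiset.card hsplit
    rw [Multiset.card_add, hoff, Complex.card_conjInvOrbit, hR] at hcard
    refine (Multiset.re_sum_le_card fun w hw => (Multiset.mem_filter.mp hw).2.le).trans ?_
    exact_mod_cast (show Multiset.card (R.filter fun w => ‖w‖ = 1) ≤ 4 by omega)
  have hsum : R.sum = ((-(p.coeff 7) / p.coeff 8 : ℝ) : ℂ) := by
    rw [(IsAlgClosed.splits _).sum_roots_eq_neg_nextCoeff_div_leadingCoeff
      (Polynomial.map_ne_zero hp), nextCoeff_map (algebraMap ℝ ℂ).injective,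
      leadingCoeff_map, nextCoeff_of_natDegree_pos (by omega), hdeg, leadingCoeff, hdeg]
    push_cast [Complex.coe_algebraMap]
    ring
  rw [← Complex.ofReal_re (-(p.coeff 7) / p.coeff 8), ← hsum, ← hsplit, Multiset.sum_add,
    Complex.add_re, hoff]
  linarith [Complex.re_sum_conjInvOrbit_lt hre]
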